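/- arXiv:2506.03599 — 5 statements merged into one kernel-verified Lean document; each statement's English description precedes it below -/
import Mathlib

section
/- Let n, d be positive integers, let X ∈ ℝ^{n×d}, and let P ∈ ℝ^{n×n} be a matrix with Pᵀ = P and P² = I_n. Define the augmented design X̃ = [X, PX] ∈ ℝ^{n×2d} (columns of X followed by columns of PX), assume X̃ᵀX̃ is invertible, and let H = X̃(X̃ᵀX̃)⁻¹X̃ᵀ be the associated OLS projection matrix. Then P H P = H. -/
/-!
Since `P² = 1`, left multiplication by `P` swaps the two column blocks of `[X, PX]`, so
`P [X, PX] = [X, PX] S` with `S` the orthogonal block swap. The hat matrix `A (AᵀA)⁻¹ Aᵀ` is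
unchanged when the design is multiplied on the right by an orthogonal matrix, and is conjugated
by `P` when the design is multiplied on the left by the orthogonal `P`; hence `P H Pᵀ = H`.
-/

open Matrix

namespace Matrix

variable {m k R : Type*} [Fintype m] [Fintype k] [DecidableEq k] [CommRing R]

noncomputable def hatMatrix (A : Matrix m k R) : Matrix m m R := A * (Aᵀ * A)⁻¹ * Aᵀ

theorem mul_inv_transpose_mul_mul_mul_transpose {S G : Matrix k k R} (hS : S * Sᵀ = 1) :
    S * (Sᵀ * G * S)⁻¹ * Sᵀ = G⁻¹ := by
  have hSinv : S⁻¹ = Sᵀ := inv_eq_right_inv hS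
  have hStinv : Sᵀ⁻¹ = S := inv_eq_left_inv hS
  rw [mul_inv_rev, mul_inv_rev, hSinv, hStinv]
  simp only [← Matrix.mul_assoc, hS, Matrix.one_mul]
  rw [Matrix.mul_assoc, hS, Matrix.mul_one]

theorem hatMatrix_mul_of_mul_transpose_eq_one (A : Matrix m k R) {S : Matrix k k R}
    (hS : S * Sᵀ = 1) : hatMatrix (A * S) = hatMatrix A := by
  have hG := mul_inv_transpose_mul_mul_mul_transpose (G := Aᵀ * A) hS
  rw [hatMatrix, hatMatrix, transpose_mul, ← hG]
  simp only [Matrix.mul_assoc]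

theorem hatMatrix_mul_of_transpose_mul_eq_one [DecidableEq m] {P : Matrix m m R}
    (hP : Pᵀ * P = 1) (A : Matrix m k R) : hatMatrix (P * A) = P * hatMatrix A * Pᵀ := by
  have hG : (P * A)ᵀ * (P * A) = Aᵀ * A := by
    rw [transpose_mul, Matrix.mul_assoc, ← Matrix.mul_assoc Pᵀ, hP, Matrix.one_mul]
  rw [hatMatrix, hatMatrix, hG, transpose_mul]
  simp only [Matrix.mul_assoc]

variable (k R) in
def blockSwap : Matrix (k ⊕ k) (k ⊕ k) R := fromBlocks 0 1 1 0

theorem blockSwap_mul_transpose : blockSwap k R * (blockSwap k R)ᵀ = 1 := by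
  simp [blockSwap, fromBlocks_transpose, fromBlocks_multiply, ← fromBlocks_one]

theorem mul_fromCols_mul_eq_fromCols_mul_blockSwap [DecidableEq m] {P : Matrix m m R} (hP : P * P = 1)
    (X : Matrix m k R) :
    P * fromCols X (P * X) = fromCols X (P * X) * blockSwap k R := by
  rw [blockSwap, mul_fromCols, fromCols_mul_fromBlocks, ← Matrix.mul_assoc, hP]
  simp

end Matrix

theorem stmt_0_general (n d : ℕ)
    (X : Matrix (Fin n) (Fin d) ℝ) (P : Matrix (Fin n) (Fin n) ℝ)
    (hPsymm : Pᵀ = P) (hPidem : P * P = 1)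
    (Xaug : Matrix (Fin n) (Fin d ⊕ Fin d) ℝ)
    (hXaug : Xaug = Matrix.fromCols X (P * X))
    (H : Matrix (Fin n) (Fin n) ℝ)
    (hH : H = Xaug * (Xaugᵀ * Xaug)⁻¹ * Xaugᵀ) :
    P * H * P = H := by
  have hH' : H = hatMatrix Xaug := hH
  have hPX : P * Xaug = Xaug * blockSwap (Fin d) ℝ := hXaug ▸ mul_fromCols_mul_eq_fromCols_mul_blockSwap hPidem X
  calc P * H * P = hatMatrix (P * Xaug) := by
        rw [hatMatrix_mul_of_transpose_mul_eq_one (by rw [hPsymm, hPidem]), hH', hPsymm]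
    _ = hatMatrix Xaug := by
        rw [hPX]
        exact hatMatrix_mul_of_mul_transpose_eq_one _ blockSwap_mul_transpose
    _ = H := hH'.symm

/-- Let `X ∈ ℝ^{n×d}` and let `P ∈ ℝ^{n×n}` be symmetric with `P² = I`.
Let `Xaug = [X, PX]` be the augmented design, assume `Xaugᵀ Xaug` is invertible, and let
`H = Xaug (Xaugᵀ Xaug)⁻¹ Xaugᵀ` be the OLS projection matrix.  Then `P H P = H`. -/
theorem stmt_0 (n d : ℕ) (hn : 0 < n) (hd : 0 < d)
    (X : Matrix (Fin n) (Fin d) ℝ) (P : Matrix (Fin n) (Fin n) ℝ)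
    (hPsymm : Pᵀ = P) (hPidem : P * P = 1)
    (Xaug : Matrix (Fin n) (Fin d ⊕ Fin d) ℝ)
    (hXaug : Xaug = Matrix.fromCols X (P * X))
    (hinv : IsUnit (Xaugᵀ * Xaug))
    (H : Matrix (Fin n) (Fin n) ℝ)
    (hH : H = Xaug * (Xaugᵀ * Xaug)⁻¹ * Xaugᵀ) :
    P * H * P = H :=
  stmt_0_general n d X P hPsymm hPidem Xaug hXaug H hH
end

section
/- Let X ∈ ℝ^{n×d}, let ε be a random vector in ℝ^n on a probability space, let β ∈ ℝ^d, and set y = Xβ + ε. Let C₁,…,C_M be a partition of {1,…,n}, and for each m let P_m ∈ ℝ^{|C_m|×|C_m|} satisfy P_mᵀ = P_m and P_m² = I. For each m define the augmented design X̃_m = [X_{C_m}, P_m X_{C_m}] ∈ ℝ^{|C_m|×2d} (rows of X restricted to C_m together with their P_m-transforms), assume X̃_mᵀX̃_m is invertible, let H_m = X̃_m(X̃_mᵀX̃_m)⁻¹X̃_mᵀ, and define the mosaic residuals ε̂_{C_m} = (I − H_m) y_{C_m}, which equals (I − H_m) ε_{C_m}. Suppose that for every z ∈ {0,1}^M the joint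 distribution of (ε_{C_1},…,ε_{C_M}) equals the joint distribution of (P₁^{z₁} ε_{C_1},…,P_M^{z_M} ε_{C_M}). Then for every z ∈ {0,1}^M the joint distribution of (ε̂_{C_1},…,ε̂_{C_M}) equals the joint distribution of (P₁^{z₁} ε̂_{C_1},…,P_M^{z_M} ε̂_{C_M}). -/
/-!
Write `X̃ = [X_C, P X_C]` and let `S` swap its two column blocks. Because `P` is an involution,
`P X̃ = X̃ S`; with `P` and `S` orthogonal this makes the hat matrix `H = X̃ (X̃ᵀX̃)⁻¹ X̃ᵀ`
commute with `P`. Since `H` fixes the columns of `X_C`, the residual `(I - H) y_C` equals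
`(I - H) ε_C`, so the tuple of residuals is one fixed linear map `F` applied to `(ε_{C_m})_m`,
and `F` commutes with every `(P_m^{z_m})_m`. The invariance of `(ε_{C_m})_m` therefore passes to
its image under `F`.
-/

open MeasureTheory ProbabilityTheory Matrix

namespace Matrix

variable {R m k : Type*} [CommRing R] [Fintype m] [Fintype k]

theorem transpose_mul_eq_mul_transpose_of_mul_eq [DecidableEq m] [DecidableEq k]
    {P : Matrix m m R} {S : Matrix k k R} {A : Matrix m k R}
    (hP : Pᵀ * P = 1) (hS : S * Sᵀ = 1) (h : P * A = A * S) :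
    Aᵀ * P = S * Aᵀ := by
  have hA : A * Sᵀ = Pᵀ * A := by
    calc A * Sᵀ = Pᵀ * P * A * Sᵀ := by rw [hP, Matrix.one_mul]
      _ = Pᵀ * A * (S * Sᵀ) := by rw [Matrix.mul_assoc Pᵀ, h]; simp only [Matrix.mul_assoc]
      _ = Pᵀ * A := by rw [hS, Matrix.mul_one]
  simpa [Matrix.transpose_mul] using (congrArg transpose hA).symm

theorem transpose_mul_gram_mul_eq_gram [DecidableEq m] {P : Matrix m m R} {S : Matrix k k R}
    {A : Matrix m k R} (hP : Pᵀ * P = 1) (h : P * A = A * S) :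
    Sᵀ * (Aᵀ * A) * S = Aᵀ * A := by
  calc Sᵀ * (Aᵀ * A) * S = (A * S)ᵀ * (A * S) := by
        simp only [Matrix.transpose_mul, Matrix.mul_assoc]
    _ = Aᵀ * (Pᵀ * P) * A := by rw [← h, Matrix.transpose_mul]; simp only [Matrix.mul_assoc]
    _ = Aᵀ * A := by rw [hP, Matrix.mul_one]

theorem commute_inv_of_transpose_mul_mul_eq [DecidableEq k] {S G : Matrix k k R}
    (hS : S * Sᵀ = 1) (hG : Sᵀ * G * S = G) : Commute S G⁻¹ := by
  have hconj : Sᵀ * G⁻¹ * S = G⁻¹ := by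
    have h := congrArg Inv.inv hG
    rwa [Matrix.mul_inv_rev, Matrix.mul_inv_rev, inv_eq_right_inv hS, inv_eq_left_inv hS,
      ← Matrix.mul_assoc] at h
  calc S * G⁻¹ = S * (Sᵀ * G⁻¹ * S) := by rw [hconj]
    _ = S * Sᵀ * G⁻¹ * S := by simp only [Matrix.mul_assoc]
    _ = G⁻¹ * S := by rw [hS, Matrix.one_mul]

theorem commute_hat_of_mul_eq_mul [DecidableEq m] [DecidableEq k] {P : Matrix m m R}
    {S : Matrix k k R} {A : Matrix m k R}
    (hP : Pᵀ * P = 1) (hS : S * Sᵀ = 1) (h : P * A = A * S) :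
    Commute P (A * (Aᵀ * A)⁻¹ * Aᵀ) := by
  have hSG : Commute S (Aᵀ * A)⁻¹ :=
    commute_inv_of_transpose_mul_mul_eq hS (transpose_mul_gram_mul_eq_gram hP h)
  calc P * (A * (Aᵀ * A)⁻¹ * Aᵀ) = A * (S * (Aᵀ * A)⁻¹) * Aᵀ := by
        simp only [← Matrix.mul_assoc, h]
    _ = A * (Aᵀ * A)⁻¹ * (S * Aᵀ) := by rw [hSG.eq]; simp only [Matrix.mul_assoc]
    _ = A * (Aᵀ * A)⁻¹ * Aᵀ * P := by
        rw [← transpose_mul_eq_mul_transpose_of_mul_eq hP hS h]; simp only [Matrix.mul_assoc]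

theorem hat_mul_self [DecidableEq k] {A : Matrix m k R} (hA : IsUnit (Aᵀ * A)) :
    A * (Aᵀ * A)⁻¹ * Aᵀ * A = A := by
  rw [Matrix.mul_assoc, Matrix.mul_assoc, nonsing_inv_mul _ ((isUnit_iff_isUnit_det _).mp hA),
    Matrix.mul_one]

theorem mul_fromCols_mul_self_eq [DecidableEq m] [DecidableEq k] {P : Matrix m m R}
    (hP : P * P = 1) (B : Matrix m k R) :
    P * fromCols B (P * B) =
      fromCols B (P * B) * (fromBlocks 0 1 1 0 : Matrix (k ⊕ k) (k ⊕ k) R) := by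
  rw [mul_fromCols, fromCols_mul_fromBlocks, ← Matrix.mul_assoc, hP]
  simp

theorem fromBlocks_zero_one_one_zero_mul_transpose [DecidableEq k] :
    (fromBlocks 0 1 1 0 : Matrix (k ⊕ k) (k ⊕ k) R) * (fromBlocks 0 1 1 0)ᵀ = 1 := by
  simp [fromBlocks_transpose, fromBlocks_multiply, ← fromBlocks_one]

theorem commute_hat_fromCols_mul_self [DecidableEq m] [DecidableEq k] {P : Matrix m m R}
    (hPt : Pᵀ = P) (hP : P * P = 1) (B : Matrix m k R) :
    Commute P (fromCols B (P * B) * ((fromCols B (P * B))ᵀ * fromCols B (P * B))⁻¹ *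
      (fromCols B (P * B))ᵀ) :=
  commute_hat_of_mul_eq_mul (by rw [hPt, hP]) fromBlocks_zero_one_one_zero_mul_transpose
    (mul_fromCols_mul_self_eq hP B)

theorem hat_fromCols_mul_left {n : Type*} [Fintype n] [DecidableEq k] [DecidableEq n]
    {B : Matrix m k R} {C : Matrix m n R} (hBC : IsUnit ((fromCols B C)ᵀ * fromCols B C)) :
    fromCols B C * ((fromCols B C)ᵀ * fromCols B C)⁻¹ * (fromCols B C)ᵀ * B = B := by
  have h := hat_mul_self hBC
  rw [mul_fromCols, fromCols_ext_iff] at h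
  exact h.1

theorem one_sub_mulVec_add_of_mul_eq [DecidableEq m] {H : Matrix m m R} {B : Matrix m k R}
    (hHB : H * B = B) (v : k → R) (e : m → R) : (1 - H) *ᵥ (B *ᵥ v + e) = (1 - H) *ᵥ e := by
  rw [mulVec_add, mulVec_mulVec, Matrix.sub_mul, Matrix.one_mul, hHB, sub_self, zero_mulVec,
    zero_add]

end Matrix

theorem ProbabilityTheory.IdentDistrib.comp_of_comp_comm {Ω α : Type*} [MeasurableSpace Ω]
    [MeasurableSpace α] {μ : Measure Ω} {U : Ω → α} {Q F : α → α}
    (h : IdentDistrib U (Q ∘ U) μ μ) (hF : Measurable F) (hQF : Q ∘ F = F ∘ Q) :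
    IdentDistrib (F ∘ U) (Q ∘ F ∘ U) μ μ := by
  rw [← Function.comp_assoc, hQF, Function.comp_assoc]
  exact h.comp hF

theorem stmt_1_general {Ω : Type*} [MeasurableSpace Ω] (μ : Measure Ω)
    (n d M : ℕ) (X : Matrix (Fin n) (Fin d) ℝ) (β : Fin d → ℝ)
    (ε : Ω → Fin n → ℝ) (hmeas : Measurable ε)
    (y : Ω → Fin n → ℝ) (hy : ∀ ω, y ω = X.mulVec β + ε ω)
    (c : Fin n → Fin M)
    (P : ∀ m : Fin M, Matrix {i : Fin n // c i = m} {i : Fin n // c i = m} ℝ)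
    (hPsymm : ∀ m, (P m)ᵀ = P m) (hPidem : ∀ m, P m * P m = 1)
    (Xc : ∀ m : Fin M, Matrix {i : Fin n // c i = m} (Fin d) ℝ)
    (hXc : ∀ m, Xc m = fun i j => X i.1 j)
    (Xaug : ∀ m : Fin M, Matrix {i : Fin n // c i = m} (Fin d ⊕ Fin d) ℝ)
    (hXaug : ∀ m, Xaug m = Matrix.fromCols (Xc m) (P m * Xc m))
    (hrank : ∀ m, IsUnit ((Xaug m)ᵀ * Xaug m))
    (H : ∀ m : Fin M, Matrix {i : Fin n // c i = m} {i : Fin n // c i = m} ℝ)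
    (hH : ∀ m, H m = Xaug m * ((Xaug m)ᵀ * Xaug m)⁻¹ * (Xaug m)ᵀ)
    (εhat : Ω → ∀ m : Fin M, {i : Fin n // c i = m} → ℝ)
    (hεhat : ∀ ω m, εhat ω m = (1 - H m).mulVec (fun i => y ω i.1))
    (hinv : ∀ z : Fin M → Bool,
      Measure.map (fun ω => fun m : Fin M => fun i : {i : Fin n // c i = m} => ε ω i.1) μ =
        Measure.map (fun ω => fun m : Fin M =>
          (if z m then P m else 1).mulVec (fun i : {i : Fin n // c i = m} => ε ω i.1)) μ) :
    ∀ z : Fin M → Bool,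
      Measure.map (fun ω => fun m : Fin M => εhat ω m) μ =
        Measure.map (fun ω => fun m : Fin M => (if z m then P m else 1).mulVec (εhat ω m)) μ := by
  intro z
  have hPH : ∀ m, Commute (P m) (H m) := fun m => by
    rw [hH, hXaug]
    exact commute_hat_fromCols_mul_self (hPsymm m) (hPidem m) (Xc m)
  have hres : ∀ ω m, εhat ω m = (1 - H m) *ᵥ (fun i => ε ω i.1) := fun ω m => by
    have hyC : (fun i : {i : Fin n // c i = m} => y ω i.1) = Xc m *ᵥ β + fun i => ε ω i.1 := by
      funext i
      simp [hy, hXc, mulVec, dotProduct]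
    have hHXc : H m * Xc m = Xc m := by
      rw [hH, hXaug]
      exact hat_fromCols_mul_left (hXaug m ▸ hrank m)
    rw [hεhat, hyC, one_sub_mulVec_add_of_mul_eq hHXc]
  let F : (∀ m : Fin M, {i : Fin n // c i = m} → ℝ) → ∀ m : Fin M, {i : Fin n // c i = m} → ℝ :=
    fun v m => (1 - H m) *ᵥ v m
  let Q : (∀ m : Fin M, {i : Fin n // c i = m} → ℝ) → ∀ m : Fin M, {i : Fin n // c i = m} → ℝ :=
    fun v m => (if z m then P m else 1) *ᵥ v m
  have hQF : Q ∘ F = F ∘ Q := by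
    funext v m
    have hQH : Commute (if z m then P m else 1) (1 - H m) := by
      split_ifs
      exacts [(Commute.one_right _).sub_right (hPH m), Commute.one_left _]
    simp only [F, Q, Function.comp_apply, mulVec_mulVec, hQH.eq]
  have hid : IdentDistrib (fun ω m (i : {i : Fin n // c i = m}) => ε ω i.1)
      (Q ∘ fun ω m (i : {i : Fin n // c i = m}) => ε ω i.1) μ μ :=
    ⟨by fun_prop, by fun_prop, hinv z⟩
  convert (hid.comp_of_comp_comm (by fun_prop) hQF).map_eq using 2 <;>
    funext ω m <;> simp only [F, Q, Function.comp_apply, hres]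

/-- **mosaic residuals preserve joint invariance.**
Let `y = Xβ + ε` with fixed design `X ∈ ℝ^{n×d}` and random errors `ε`, let
`c : Fin n → Fin M` encode a partition of `{1,…,n}` into clusters, and for each cluster
let `P_m` be symmetric with `P_m² = I`.  For each cluster form the augmented design
`X̃_m = [X_{C_m}, P_m X_{C_m}]` (assumed to have `X̃_mᵀX̃_m` invertible), the projection
`H_m = X̃_m(X̃_mᵀX̃_m)⁻¹X̃_mᵀ`, and the mosaic residuals `ε̂_{C_m} = (I − H_m) y_{C_m}`.
If for every `z ∈ {0,1}^M` the tuple `(ε_{C_1},…,ε_{C_M})` is equal in distribution to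
`(P₁^{z₁} ε_{C_1},…,P_M^{z_M} ε_{C_M})`, then the same invariance holds for the tuple of
mosaic residuals `(ε̂_{C_1},…,ε̂_{C_M})`. -/
theorem stmt_1 {Ω : Type*} [MeasurableSpace Ω] (μ : Measure Ω) [IsProbabilityMeasure μ]
    (n d M : ℕ) (X : Matrix (Fin n) (Fin d) ℝ) (β : Fin d → ℝ)
    (ε : Ω → Fin n → ℝ) (hmeas : Measurable ε)
    (y : Ω → Fin n → ℝ) (hy : ∀ ω, y ω = X.mulVec β + ε ω)
    (c : Fin n → Fin M)
    (P : ∀ m : Fin M, Matrix {i : Fin n // c i = m} {i : Fin n // c i = m} ℝ)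
    (hPsymm : ∀ m, (P m)ᵀ = P m) (hPidem : ∀ m, P m * P m = 1)
    (Xc : ∀ m : Fin M, Matrix {i : Fin n // c i = m} (Fin d) ℝ)
    (hXc : ∀ m, Xc m = fun i j => X i.1 j)
    (Xaug : ∀ m : Fin M, Matrix {i : Fin n // c i = m} (Fin d ⊕ Fin d) ℝ)
    (hXaug : ∀ m, Xaug m = Matrix.fromCols (Xc m) (P m * Xc m))
    (hrank : ∀ m, IsUnit ((Xaug m)ᵀ * Xaug m))
    (H : ∀ m : Fin M, Matrix {i : Fin n // c i = m} {i : Fin n // c i = m} ℝ)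
    (hH : ∀ m, H m = Xaug m * ((Xaug m)ᵀ * Xaug m)⁻¹ * (Xaug m)ᵀ)
    (εhat : Ω → ∀ m : Fin M, {i : Fin n // c i = m} → ℝ)
    (hεhat : ∀ ω m, εhat ω m = (1 - H m).mulVec (fun i => y ω i.1))
    (hinv : ∀ z : Fin M → Bool,
      Measure.map (fun ω => fun m : Fin M => fun i : {i : Fin n // c i = m} => ε ω i.1) μ =
        Measure.map (fun ω => fun m : Fin M =>
          (if z m then P m else 1).mulVec (fun i : {i : Fin n // c i = m} => ε ω i.1)) μ) :
    ∀ z : Fin M → Bool,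
      Measure.map (fun ω => fun m : Fin M => εhat ω m) μ =
        Measure.map (fun ω => fun m : Fin M => (if z m then P m else 1).mulVec (εhat ω m)) μ :=
  stmt_1_general μ n d M X β ε hmeas y hy c P hPsymm hPidem Xc hXc Xaug hXaug hrank H hH εhat hεhat
    hinv
end

section
/- Consider panel data Y ∈ ℝ^{N×T} with Y_{i,t} = X_{i,t}ᵀβ* + ε_{i,t}, fixed covariates X_{i,t} ∈ ℝ^D, fixed β* ∈ ℝ^D, and a random error matrix ε ∈ ℝ^{N×T}. Let C₁,…,C_M partition {1,…,N} and let P ∈ ℝ^{T×T} satisfy Pᵀ = P and P² = I_T. Suppose: (i) marginal invariance, i.e., ε_{C_m} and ε_{C_m}P are equal in distribution for each m; and (ii) the null hypothesis that ε_{C_1},…,ε_{C_M} are jointly independent. Let ε̂ ∈ ℝ^{N×T} be the mosaic residual matrix: for each cluster m, ε̂_{C_m} is the OLS residual of the vectorized outcomes {Y_{i,t} : i ∈ C_m, t ∈ [T]} regressed on the 2D augmented covariates consisting of X_{i,t} together with the transformed covariates X^{trans}_{i,t}, where the d-th transformed covariate matrix is X^{(d)}P (X^{(d)} ∈ ℝ^{N×T}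 being the matrix of values of the d-th covariate), assuming each cluster's augmented design has full column rank. Independently of ε, draw R i.i.d. uniform random vectors B^{(1)},…,B^{(R)} ∈ {0,1}^M and define randomized residuals ε̃^{(r)} by ε̃^{(r)}_{C_m} = ε̂_{C_m} P^{B^{(r)}_m}. Then for every measurable test statistic S : ℝ^{N×T} → ℝ and every α ∈ (0,1), the p-value p = (1 + #{r ∈ [R] : S(ε̂) ≤ S(ε̃^{(r)})})/(R+1) satisfies P(p ≤ α) ≤ α. -/
/-!
Right multiplication by `P` on the rows of a cluster maps that cluster's augmented design onto
itself, with its two column blocks swapped (because `P² = 1`). It therefore commutes with the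
cluster's residual maker, so the mosaic residuals are equivariant under the cluster-wise
transforms `z ∈ {0,1}^M`; they also do not see the fixed part `Xβ*`. Marginal invariance together
with independence of the clusters makes the law of `ε`, hence of `ε̂`, invariant under every such
transform. What remains is the validity of a Monte Carlo randomization test for a finite group
acting with invariant law: rebasing the draws at the `j`-th one shows that the rank of `S(ε̂)`
among the `R + 1` statistics has the same law as the rank of the `j`-th one, and at most `m` of
the `R + 1` ranks can be `≤ m`, so `(R + 1) P(p ≤ α) ≤ ⌊α (R + 1)⌋`.
-/

open MeasureTheory ProbabilityTheory Matrix Finset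

noncomputable section

instance matrixMeasurableSpace {α β γ : Type*} [MeasurableSpace γ] :
    MeasurableSpace (Matrix α β γ) :=
  (inferInstance : MeasurableSpace (α → β → γ))

/-- Cluster-wise right transformation by `P^{z_m}`: the rows of cluster `m` are
right-multiplied by `P` when `z m = true`. -/
def clusterTransform {N T M : ℕ} (c : Fin N → Fin M) (P : Matrix (Fin T) (Fin T) ℝ)
    (z : Fin M → Bool) (E : Matrix (Fin N) (Fin T) ℝ) : Matrix (Fin N) (Fin T) ℝ :=
  fun i t => if z (c i) then (∑ s, E i s * P s t) else E i t

/-- Rows of `E` belonging to cluster `m`. -/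
def restrictRows {N T M : ℕ} (c : Fin N → Fin M) (m : Fin M)
    (E : Matrix (Fin N) (Fin T) ℝ) : Matrix {i : Fin N // c i = m} (Fin T) ℝ :=
  fun i t => E i.1 t

/-- Augmented design matrix for cluster `m`: for the vectorized observations `(i,t)` with
`c i = m`, the `2D` covariates are `X_{i,t}` together with the transformed covariates
`(X^{(d)} P)_{i,t}`. -/
def augDesign {N T D M : ℕ} (X : Fin D → Matrix (Fin N) (Fin T) ℝ)
    (P : Matrix (Fin T) (Fin T) ℝ) (c : Fin N → Fin M) (m : Fin M) :
    Matrix ({i : Fin N // c i = m} × Fin T) (Fin D ⊕ Fin D) ℝ :=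
  fun p => Sum.elim (fun d => X d p.1.1 p.2) (fun d => (X d * P) p.1.1 p.2)

/-- Mosaic residuals: cluster-by-cluster OLS residuals of the vectorized entries of `V`
regressed on the augmented design of that cluster. -/
def mosaicResid {N T D M : ℕ} (X : Fin D → Matrix (Fin N) (Fin T) ℝ)
    (P : Matrix (Fin T) (Fin T) ℝ) (c : Fin N → Fin M)
    (V : Matrix (Fin N) (Fin T) ℝ) : Matrix (Fin N) (Fin T) ℝ :=
  fun i t =>
    ((1 - augDesign X P c (c i) * ((augDesign X P c (c i))ᵀ * augDesign X P c (c i))⁻¹ *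
        (augDesign X P c (c i))ᵀ).mulVec (fun q => V q.1.1 q.2)) (⟨i, rfl⟩, t)

open scoped ENNReal Kronecker

section RankCount

variable {G α : Type*} [AddGroup G] [AddAction G α]

def rankCount {ι : Type*} [Fintype ι] (S : α → ℝ) (g : ι → G) (j : ι) (x : α) : ℕ :=
  #{k | S (g j +ᵥ x) ≤ S (g k +ᵥ x)}

lemma card_filter_rank_le {ι β : Type*} [Fintype ι] [LinearOrder β] (W : ι → β) (m : ℕ) :
    #{j | #{k | W j ≤ W k} ≤ m} ≤ m := by
  set J : Finset ι := {j | #{k | W j ≤ W k} ≤ m}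
  rcases J.eq_empty_or_nonempty with hJ | hJ
  · simp [hJ]
  -- every element of `J` dominates the element of `J` where `W` is smallest
  obtain ⟨j₀, hj₀, hmin⟩ := J.exists_min_image W hJ
  calc #J ≤ #{k | W j₀ ≤ W k} := card_le_card fun k hk => mem_filter.2 ⟨mem_univ k, hmin k hk⟩
    _ ≤ m := (mem_filter.1 hj₀).2

lemma rankCount_perm {ι : Type*} [Fintype ι] (S : α → ℝ) (σ : Equiv.Perm ι) (g : ι → G) (h : G)
    (j : ι) (x : α) :
    rankCount S g (σ j) x = rankCount S (fun k => g (σ k) - h) j (h +ᵥ x) := by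
  simp only [rankCount, vadd_vadd, sub_add_cancel, card_filter]
  exact (Equiv.sum_comp σ _).symm

variable {R : ℕ}

def prependZero (b : Fin R → G) : Fin (R + 1) → G :=
  Fin.cons 0 b

@[simp]
lemma prependZero_zero (b : Fin R → G) : prependZero b 0 = 0 :=
  rfl

@[simp]
lemma prependZero_succ (b : Fin R → G) (r : Fin R) : prependZero b r.succ = b r :=
  rfl

/-- The draws `b` seen from the `j`-th one, which becomes the new identity. -/
def rebase (j : Fin (R + 1)) (b : Fin R → G) : Fin R → G :=
  Fin.tail fun k => prependZero b (Equiv.swap 0 j k) - prependZero b j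

lemma prependZero_rebase (j : Fin (R + 1)) (b : Fin R → G) :
    prependZero (rebase j b) = fun k => prependZero b (Equiv.swap 0 j k) - prependZero b j := by
  have h := Fin.cons_self_tail fun k => prependZero b (Equiv.swap 0 j k) - prependZero b j
  rwa [Equiv.swap_apply_left, sub_self] at h

lemma rebase_rebase (j : Fin (R + 1)) (b : Fin R → G) : rebase j (rebase j b) = b := by
  apply Fin.cons_right_injective (α := fun _ => G) 0
  change prependZero _ = prependZero _
  rw [prependZero_rebase, prependZero_rebase]
  funext k
  simp [Equiv.swap_apply_self]

def rebasePerm (j : Fin (R + 1)) : Equiv.Perm (Fin R → G) :=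
  Function.Involutive.toPerm _ (rebase_rebase j)

lemma rankCount_rebase (S : α → ℝ) (j : Fin (R + 1)) (b : Fin R → G) (x : α) :
    rankCount S (prependZero b) j x =
      rankCount S (prependZero (rebase j b)) 0 (prependZero b j +ᵥ x) := by
  have h := rankCount_perm S (Equiv.swap 0 j) (prependZero b) (prependZero b j) 0 x
  rwa [Equiv.swap_apply_left, ← prependZero_rebase] at h

lemma rankCount_prependZero_zero (S : α → ℝ) (b : Fin R → G) (x : α) :
    rankCount S (prependZero b) 0 x = #{r | S x ≤ S (b r +ᵥ x)} + 1 := by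
  rw [rankCount, card_filter, Fin.sum_univ_succ, card_filter]
  simp [add_comm]

end RankCount

section Probability

variable {Ω : Type*} [MeasurableSpace Ω] {μ : Measure Ω}

open scoped Classical in
lemma sum_measure_le_of_forall_card_le {ι : Type*} [Fintype ι] {A : ι → Set Ω}
    (hA : ∀ i, MeasurableSet (A i)) {m : ℕ} (h : ∀ ω, #{i | ω ∈ A i} ≤ m) :
    ∑ i, μ (A i) ≤ m * μ Set.univ :=
  calc ∑ i, μ (A i) = ∫⁻ ω, ∑ i, (A i).indicator 1 ω ∂μ := by
        rw [lintegral_finsetSum _ fun i _ => measurable_one.indicator (hA i)]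
        simp [lintegral_indicator_one (hA _)]
    _ ≤ ∫⁻ _, (m : ℝ≥0∞) ∂μ := lintegral_mono fun ω => by
        simpa [Set.indicator_apply, sum_boole] using h ω
    _ = m * μ Set.univ := lintegral_const _

lemma measure_setOf_mem_eq_sum_of_indepFun {α β : Type*} [MeasurableSpace α] [MeasurableSpace β]
    [Fintype β] [Nonempty β] [MeasurableSingletonClass β] {E : Ω → α} {B : Ω → β}
    (hE : Measurable E) (hB : Measurable B) (hind : IndepFun E B μ)
    (hunif : μ.map B = (PMF.uniformOfFintype β).toMeasure) {A : β → Set α}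
    (hA : ∀ b, MeasurableSet (A b)) :
    μ {ω | E ω ∈ A (B ω)} = ∑ b, (Fintype.card β : ℝ≥0∞)⁻¹ * μ (E ⁻¹' A b) := by
  have hcover : {ω | E ω ∈ A (B ω)} = ⋃ b ∈ (univ : Finset β), B ⁻¹' {b} ∩ E ⁻¹' A b := by
    ext ω
    simp
  rw [hcover, measure_biUnion_finset]
  · refine sum_congr rfl fun b _ => ?_
    rw [Set.inter_comm, indepFun_iff_measure_inter_preimage_eq_mul.mp hind _ _ (hA b)
      (measurableSet_singleton b), ← Measure.map_apply hB (measurableSet_singleton b), hunif,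
      PMF.toMeasure_apply_singleton _ _ (measurableSet_singleton b), PMF.uniformOfFintype_apply,
      mul_comm]
  · intro b _ b' _ hne
    exact Set.disjoint_left.2 fun ω h h' => hne (h.1.symm.trans h'.1)
  · exact fun b _ => (hB (measurableSet_singleton b)).inter (hE (hA b))

lemma ProbabilityTheory.iIndepFun.map_fun_comp_eq_map_fun {ι : Type*} [Fintype ι]
    {β : ι → Type*} [∀ i, MeasurableSpace (β i)] {f : ∀ i, Ω → β i} (hf : ∀ i, Measurable (f i))
    (h : iIndepFun f μ) {g : ∀ i, β i → β i} (hg : ∀ i, Measurable (g i))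
    (hgf : ∀ i, μ.map (g i ∘ f i) = μ.map (f i)) :
    μ.map (fun ω i => g i (f i ω)) = μ.map (fun ω i => f i ω) := by
  refine ((h.comp g hg).map_fun_eq_pi_map fun i => ((hg i).comp (hf i)).aemeasurable).trans ?_
  rw [h.map_fun_eq_pi_map fun i => (hf i).aemeasurable]
  exact congrArg Measure.pi (funext hgf)

end Probability

section RandomizationTest

variable {Ω G α : Type*} [MeasurableSpace Ω] {μ : Measure Ω} [AddGroup G] [MeasurableSpace α]
  [AddAction G α] [MeasurableConstVAdd G α] {R : ℕ} {E : Ω → α} {S : α → ℝ}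

lemma measurable_rankCount {ι : Type*} [Fintype ι] (hS : Measurable S) (g : ι → G) (j : ι) :
    Measurable (rankCount S g j) := by
  show Measurable fun x => rankCount S g j x
  simp only [rankCount, card_filter]
  exact Finset.measurable_sum _ fun k _ => Measurable.ite
    (measurableSet_le (hS.comp (measurable_const_vadd _)) (hS.comp (measurable_const_vadd _)))
    measurable_const measurable_const

lemma measure_preimage_rankCount_le_eq (hE : Measurable E)
    (hinv : ∀ g : G, μ.map (fun ω => g +ᵥ E ω) = μ.map E) (hS : Measurable S) (m : ℕ)
    (j : Fin (R + 1)) (b : Fin R → G) :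
    μ (E ⁻¹' {x | rankCount S (prependZero b) j x ≤ m}) =
      μ (E ⁻¹' {x | rankCount S (prependZero (rebase j b)) 0 x ≤ m}) := by
  have hs : MeasurableSet {x | rankCount S (prependZero (rebase j b)) 0 x ≤ m} :=
    measurable_rankCount hS _ 0 measurableSet_Iic
  have hvadd : Measurable fun ω => prependZero b j +ᵥ E ω := (measurable_const_vadd _).comp hE
  have hpre : E ⁻¹' {x | rankCount S (prependZero b) j x ≤ m} =
      (fun ω => prependZero b j +ᵥ E ω) ⁻¹'
        {x | rankCount S (prependZero (rebase j b)) 0 x ≤ m} := by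
    ext ω
    simp [rankCount_rebase S j b]
  rw [hpre, ← Measure.map_apply hvadd hs, hinv, Measure.map_apply hE hs]

theorem card_mul_measure_rankCount_le [IsProbabilityMeasure μ] [Fintype G] [MeasurableSpace G]
    [MeasurableSingletonClass G] {B : Ω → Fin R → G} (hE : Measurable E)
    (hinv : ∀ g : G, μ.map (fun ω => g +ᵥ E ω) = μ.map E) (hB : Measurable B)
    (hunif : μ.map B = (PMF.uniformOfFintype (Fin R → G)).toMeasure) (hind : IndepFun E B μ)
    (hS : Measurable S) (m : ℕ) :
    (R + 1 : ℝ≥0∞) * μ {ω | rankCount S (prependZero (B ω)) 0 (E ω) ≤ m} ≤ m := by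
  set u := (Fintype.card (Fin R → G) : ℝ≥0∞)⁻¹
  let A : Fin (R + 1) → (Fin R → G) → Set α := fun j b =>
    {x | rankCount S (prependZero b) j x ≤ m}
  have hA : ∀ j b, MeasurableSet (A j b) := fun j b =>
    measurable_rankCount hS _ j measurableSet_Iic
  have hdecomp : μ {ω | rankCount S (prependZero (B ω)) 0 (E ω) ≤ m} =
      ∑ b, u * μ (E ⁻¹' A 0 b) :=
    measure_setOf_mem_eq_sum_of_indepFun hE hB hind hunif (hA 0)
  have hrebase : ∀ j, ∑ b, u * μ (E ⁻¹' A 0 b) = ∑ b, u * μ (E ⁻¹' A j b) := fun j => by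
    rw [← Equiv.sum_comp (rebasePerm j)]
    exact sum_congr rfl fun b _ => by
      rw [measure_preimage_rankCount_le_eq hE hinv hS m j b]
      rfl
  have hlayer : ∀ b, ∑ j, μ (E ⁻¹' A j b) ≤ m := fun b => by
    simpa using sum_measure_le_of_forall_card_le (μ := μ) (fun j => hE (hA j b)) fun ω => by
      convert card_filter_rank_le (fun k => S (prependZero b k +ᵥ E ω)) m using 4
      rfl
  calc (R + 1 : ℝ≥0∞) * μ {ω | rankCount S (prependZero (B ω)) 0 (E ω) ≤ m}
      = ∑ j : Fin (R + 1), ∑ b, u * μ (E ⁻¹' A j b) := by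
        simp [hdecomp, ← hrebase, sum_const]
    _ = ∑ b, u * ∑ j, μ (E ⁻¹' A j b) := by
        rw [sum_comm]
        simp [mul_sum]
    _ ≤ ∑ _b : Fin R → G, u * m := by
        gcongr with b
        exact hlayer b
    _ = m := by
        rw [sum_const, card_univ, nsmul_eq_mul, ← mul_assoc,
          ENNReal.mul_inv_cancel (by simp) (by simp), one_mul]

theorem measure_pValue_le [IsProbabilityMeasure μ] [Fintype G] [MeasurableSpace G]
    [MeasurableSingletonClass G] {B : Ω → Fin R → G} (hE : Measurable E)
    (hinv : ∀ g : G, μ.map (fun ω => g +ᵥ E ω) = μ.map E) (hB : Measurable B)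
    (hunif : μ.map B = (PMF.uniformOfFintype (Fin R → G)).toMeasure) (hind : IndepFun E B μ)
    (hS : Measurable S) {a : ℝ} (ha : 0 ≤ a) :
    μ {ω | (1 + (Nat.card {r : Fin R // S (E ω) ≤ S (B ω r +ᵥ E ω)} : ℝ)) / (R + 1) ≤ a} ≤
      ENNReal.ofReal a := by
  set m := ⌊a * (R + 1)⌋₊
  have hevent :
      {ω | (1 + (Nat.card {r : Fin R // S (E ω) ≤ S (B ω r +ᵥ E ω)} : ℝ)) / (R + 1) ≤ a} =
        {ω | rankCount S (prependZero (B ω)) 0 (E ω) ≤ m} := by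
    ext ω
    rw [Set.mem_ofPred_eq, Set.mem_ofPred_eq, rankCount_prependZero_zero, Nat.card_eq_fintype_card,
      Fintype.card_subtype, div_le_iff₀ (by positivity), Nat.le_floor_iff (by positivity)]
    push_cast
    rw [add_comm]
  have hm : (m : ℝ≥0∞) ≤ (R + 1 : ℝ≥0∞) * ENNReal.ofReal a :=
    calc (m : ℝ≥0∞) = ENNReal.ofReal m := (ENNReal.ofReal_natCast m).symm
      _ ≤ ENNReal.ofReal ((R + 1) * a) :=
        ENNReal.ofReal_le_ofReal (by rw [mul_comm]; exact Nat.floor_le (by positivity))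
      _ = (R + 1 : ℝ≥0∞) * ENNReal.ofReal a := by
        rw [ENNReal.ofReal_mul (by positivity)]
        norm_cast
  rw [hevent]
  refine (ENNReal.mul_le_mul_iff_right (a := R + 1) (by simp) (by simp)).1 ?_
  exact (card_mul_measure_rankCount_le hE hinv hB hunif hind hS m).trans hm

end RandomizationTest

section ResidualMaker

variable {m n : Type*} [Fintype m] [Fintype n] [DecidableEq m] [DecidableEq n]

def residualMaker (A : Matrix m n ℝ) : Matrix m m ℝ :=
  1 - A * (Aᵀ * A)⁻¹ * Aᵀ

lemma residualMaker_mul (A : Matrix m n ℝ) (hA : IsUnit (Aᵀ * A)) : residualMaker A * A = 0 := by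
  rw [residualMaker, Matrix.sub_mul, Matrix.one_mul, Matrix.mul_assoc _ Aᵀ, Matrix.mul_assoc,
    Matrix.nonsing_inv_mul _ ((Matrix.isUnit_iff_isUnit_det _).mp hA), Matrix.mul_one, sub_self]

lemma commute_residualMaker {A : Matrix m n ℝ} {Q : Matrix m m ℝ} {K : Matrix n n ℝ}
    (hA : IsUnit (Aᵀ * A)) (hQA : Q * A = A * K) (hAQ : Aᵀ * Q = K * Aᵀ) :
    Commute Q (residualMaker A) := by
  have hK : Commute K ↑hA.unit := by
    rw [hA.unit_spec, Commute, SemiconjBy, ← Matrix.mul_assoc, ← hAQ, Matrix.mul_assoc, hQA,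
      Matrix.mul_assoc]
  have hK' : K * (Aᵀ * A)⁻¹ = (Aᵀ * A)⁻¹ * K := by
    rw [Matrix.nonsing_inv_eq_ringInverse, ← hA.unit_spec, Ring.inverse_unit]
    exact hK.units_inv_right.eq
  refine (Commute.one_right Q).sub_right ?_
  calc Q * (A * (Aᵀ * A)⁻¹ * Aᵀ) = A * (K * (Aᵀ * A)⁻¹) * Aᵀ := by
        simp only [← Matrix.mul_assoc, hQA]
    _ = A * (Aᵀ * A)⁻¹ * Aᵀ * Q := by
        rw [hK', Matrix.mul_assoc, Matrix.mul_assoc, ← hAQ]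
        simp only [Matrix.mul_assoc]

end ResidualMaker

section Clusters

variable {N T D M : ℕ} (c : Fin N → Fin M) (P : Matrix (Fin T) (Fin T) ℝ)

-- `vec Eᵀ` is the row-major vectorization `(i, t) ↦ E i t` that `mosaicResid` regresses.
def rightMulVec (ι : Type*) [DecidableEq ι] (P : Matrix (Fin T) (Fin T) ℝ) :
    Matrix (ι × Fin T) (ι × Fin T) ℝ :=
  (1 : Matrix ι ι ℝ) ⊗ₖ Pᵀ

lemma rightMulVec_mulVec {ι : Type*} [Fintype ι] [DecidableEq ι] (E : Matrix ι (Fin T) ℝ) :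
    rightMulVec ι P *ᵥ vec Eᵀ = vec (E * P)ᵀ := by
  rw [rightMulVec, ← vec_mul_eq_mulVec, Matrix.transpose_mul]

lemma transpose_rightMulVec (ι : Type*) [DecidableEq ι] (hP : Pᵀ = P) :
    (rightMulVec ι P)ᵀ = rightMulVec ι P := by
  rw [rightMulVec, ← Matrix.kroneckerMap_transpose, Matrix.transpose_one,
    Matrix.transpose_transpose, hP]

def swapBlocks (D : ℕ) : Matrix (Fin D ⊕ Fin D) (Fin D ⊕ Fin D) ℝ :=
  Matrix.fromBlocks 0 1 1 0

lemma transpose_swapBlocks : (swapBlocks D)ᵀ = swapBlocks D := by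
  simp [swapBlocks, Matrix.fromBlocks_transpose]

lemma restrictRows_mul (m : Fin M) (E : Matrix (Fin N) (Fin T) ℝ) :
    restrictRows c m (E * P) = restrictRows c m E * P :=
  rfl

lemma restrictRows_clusterTransform (z : Fin M → Bool) (m : Fin M)
    (E : Matrix (Fin N) (Fin T) ℝ) :
    restrictRows c m (clusterTransform c P z E) =
      if z m then restrictRows c m E * P else restrictRows c m E := by
  ext ⟨i, rfl⟩ t
  split_ifs with h <;> simp [restrictRows, clusterTransform, h, Matrix.mul_apply]

lemma ext_restrictRows {E F : Matrix (Fin N) (Fin T) ℝ}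
    (h : ∀ m, restrictRows c m E = restrictRows c m F) : E = F := by
  ext i t
  exact congrFun (congrFun (h (c i)) ⟨i, rfl⟩) t

lemma rightMulVec_mul_augDesign (X : Fin D → Matrix (Fin N) (Fin T) ℝ) (hP : P * P = 1)
    (m : Fin M) :
    rightMulVec {i // c i = m} P * augDesign X P c m = augDesign X P c m * swapBlocks D := by
  ext q (d | d)
  · change (rightMulVec _ P *ᵥ vec (restrictRows c m (X d))ᵀ) q = _
    rw [rightMulVec_mulVec, ← restrictRows_mul]
    simp [swapBlocks, Matrix.mul_apply, Matrix.one_apply, augDesign, restrictRows]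
  · change (rightMulVec _ P *ᵥ vec (restrictRows c m (X d * P))ᵀ) q = _
    rw [rightMulVec_mulVec, ← restrictRows_mul, Matrix.mul_assoc, hP, Matrix.mul_one]
    simp [swapBlocks, Matrix.mul_apply, Matrix.one_apply, augDesign, restrictRows]

lemma transpose_augDesign_mul_rightMulVec (X : Fin D → Matrix (Fin N) (Fin T) ℝ)
    (hPt : Pᵀ = P) (hP : P * P = 1) (m : Fin M) :
    (augDesign X P c m)ᵀ * rightMulVec {i // c i = m} P =
      swapBlocks D * (augDesign X P c m)ᵀ := by
  rw [← transpose_rightMulVec P _ hPt, ← Matrix.transpose_mul, rightMulVec_mul_augDesign c P X hP,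
    Matrix.transpose_mul, transpose_swapBlocks]

lemma vec_restrictRows_mosaicResid (X : Fin D → Matrix (Fin N) (Fin T) ℝ) (m : Fin M)
    (V : Matrix (Fin N) (Fin T) ℝ) :
    vec (restrictRows c m (mosaicResid X P c V))ᵀ =
      residualMaker (augDesign X P c m) *ᵥ vec (restrictRows c m V)ᵀ := by
  ext ⟨⟨i, rfl⟩, t⟩
  rfl

lemma mosaicResid_clusterTransform (X : Fin D → Matrix (Fin N) (Fin T) ℝ) (hPt : Pᵀ = P)
    (hP : P * P = 1) (hrank : ∀ m, IsUnit ((augDesign X P c m)ᵀ * augDesign X P c m))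
    (z : Fin M → Bool) (V : Matrix (Fin N) (Fin T) ℝ) :
    mosaicResid X P c (clusterTransform c P z V) =
      clusterTransform c P z (mosaicResid X P c V) := by
  refine ext_restrictRows c fun m => ?_
  rw [← Matrix.transpose_inj, ← vec_inj, vec_restrictRows_mosaicResid,
    restrictRows_clusterTransform, restrictRows_clusterTransform]
  split_ifs
  · have hcomm := commute_residualMaker (hrank m) (rightMulVec_mul_augDesign c P X hP m)
      (transpose_augDesign_mul_rightMulVec c P X hPt hP m)
    rw [← rightMulVec_mulVec, ← rightMulVec_mulVec, vec_restrictRows_mosaicResid, mulVec_mulVec,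
      mulVec_mulVec, hcomm.eq]
  · rw [vec_restrictRows_mosaicResid]

lemma mosaicResid_eq_of_eq_add (X : Fin D → Matrix (Fin N) (Fin T) ℝ)
    (hrank : ∀ m, IsUnit ((augDesign X P c m)ᵀ * augDesign X P c m)) (β : Fin D → ℝ)
    {W V : Matrix (Fin N) (Fin T) ℝ} (hW : ∀ i t, W i t = (∑ d, X d i t * β d) + V i t) :
    mosaicResid X P c W = mosaicResid X P c V := by
  refine ext_restrictRows c fun m => ?_
  have hvec : vec (restrictRows c m W)ᵀ =
      vec (restrictRows c m V)ᵀ + augDesign X P c m *ᵥ Sum.elim β 0 := by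
    ext q
    simp [hW, restrictRows, augDesign, mulVec, dotProduct, add_comm]
  rw [← Matrix.transpose_inj, ← vec_inj, vec_restrictRows_mosaicResid,
    vec_restrictRows_mosaicResid, hvec, mulVec_add, mulVec_mulVec, residualMaker_mul _ (hrank m),
    zero_mulVec, add_zero]

lemma clusterTransform_zero (E : Matrix (Fin N) (Fin T) ℝ) : clusterTransform c P 0 E = E :=
  rfl

lemma clusterTransform_clusterTransform (hP : P * P = 1) (z z' : Fin M → Bool)
    (E : Matrix (Fin N) (Fin T) ℝ) :
    clusterTransform c P z (clusterTransform c P z' E) = clusterTransform c P (z + z') E := by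
  refine ext_restrictRows c fun m => ?_
  simp only [restrictRows_clusterTransform, Pi.add_apply]
  rcases Bool.eq_false_or_eq_true (z m) with h | h <;>
    rcases Bool.eq_false_or_eq_true (z' m) with h' | h' <;>
    simp [h, h', Bool.add_eq_xor, Matrix.mul_assoc, hP]

abbrev clusterAction (hP : P * P = 1) : AddAction (Fin M → Bool) (Matrix (Fin N) (Fin T) ℝ) where
  vadd := clusterTransform c P
  zero_vadd := clusterTransform_zero c P
  add_vadd z z' E := (clusterTransform_clusterTransform c P hP z z' E).symm

end Clusters

section ClusterLaws

variable {N T D M : ℕ} (c : Fin N → Fin M) (P : Matrix (Fin T) (Fin T) ℝ)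

def ofClusterRows (F : ∀ m : Fin M, Matrix {i // c i = m} (Fin T) ℝ) :
    Matrix (Fin N) (Fin T) ℝ :=
  fun i t => F (c i) ⟨i, rfl⟩ t

lemma measurable_ofClusterRows : Measurable (ofClusterRows (T := T) c) := by
  refine measurable_pi_lambda _ fun i => measurable_pi_lambda _ fun t => ?_
  unfold ofClusterRows
  fun_prop

lemma measurable_restrictRows (m : Fin M) : Measurable (restrictRows (T := T) c m) := by
  refine measurable_pi_lambda _ fun i => measurable_pi_lambda _ fun t => ?_
  unfold restrictRows
  fun_prop

lemma measurable_matrix_mul_right {ι : Type*} [Fintype ι] :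
    Measurable fun E : Matrix ι (Fin T) ℝ => E * P := by
  refine measurable_pi_lambda _ fun i => measurable_pi_lambda _ fun t => ?_
  simp only [Matrix.mul_apply]
  fun_prop

lemma measurable_clusterTransform (z : Fin M → Bool) : Measurable (clusterTransform c P z) := by
  refine measurable_pi_lambda _ fun i => measurable_pi_lambda _ fun t => ?_
  unfold clusterTransform
  split_ifs <;> fun_prop

lemma measurable_mosaicResid (X : Fin D → Matrix (Fin N) (Fin T) ℝ) :
    Measurable (mosaicResid X P c) := by
  refine measurable_pi_lambda _ fun i => measurable_pi_lambda _ fun t => ?_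
  simp only [mosaicResid, mulVec, dotProduct]
  fun_prop

variable {Ω : Type*} [MeasurableSpace Ω] {μ : Measure Ω} {ε : Ω → Matrix (Fin N) (Fin T) ℝ}

lemma map_clusterTransform_eq (hε : Measurable ε)
    (hinv : ∀ m, μ.map (fun ω => restrictRows c m (ε ω)) =
      μ.map (fun ω => restrictRows c m (ε ω * P)))
    (hind : iIndepFun (fun m ω => restrictRows c m (ε ω)) μ) (z : Fin M → Bool) :
    μ.map (fun ω => clusterTransform c P z (ε ω)) = μ.map ε := by
  let g : ∀ m : Fin M, Matrix {i // c i = m} (Fin T) ℝ → Matrix {i // c i = m} (Fin T) ℝ :=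
    fun m E => if z m then E * P else E
  have hg : ∀ m, Measurable (g m) := fun m => by
    by_cases hz : z m
    · simpa [g, hz] using measurable_matrix_mul_right P
    · simpa [g, hz] using measurable_id'
  have hgf : ∀ m, μ.map (g m ∘ fun ω => restrictRows c m (ε ω)) =
      μ.map (fun ω => restrictRows c m (ε ω)) := fun m => by
    by_cases hz : z m
    · simp only [g, hz, if_true]
      exact (hinv m).symm
    · simp only [g, hz]
      rfl
  have hrows : ∀ m, Measurable fun ω => restrictRows c m (ε ω) :=
    fun m => (measurable_restrictRows c m).comp hε
  have hrows_g : Measurable fun ω m => g m (restrictRows c m (ε ω)) :=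
    measurable_pi_lambda _ fun m => (hg m).comp (hrows m)
  calc μ.map (fun ω => clusterTransform c P z (ε ω))
      = (μ.map fun ω m => g m (restrictRows c m (ε ω))).map (ofClusterRows c) := by
        rw [Measure.map_map (measurable_ofClusterRows c) hrows_g]
        congr 1
        funext ω
        exact congrArg (ofClusterRows c)
          (funext fun m => restrictRows_clusterTransform c P z m (ε ω))
    _ = (μ.map fun ω m => restrictRows c m (ε ω)).map (ofClusterRows c) := by
        rw [hind.map_fun_comp_eq_map_fun hrows hg hgf]
    _ = μ.map ε := by
        rw [Measure.map_map (measurable_ofClusterRows c) (measurable_pi_lambda _ hrows)]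
        rfl

lemma map_clusterTransform_mosaicResid (X : Fin D → Matrix (Fin N) (Fin T) ℝ) (hPt : Pᵀ = P)
    (hP : P * P = 1) (hrank : ∀ m, IsUnit ((augDesign X P c m)ᵀ * augDesign X P c m))
    (hε : Measurable ε)
    (hinv : ∀ m, μ.map (fun ω => restrictRows c m (ε ω)) =
      μ.map (fun ω => restrictRows c m (ε ω * P)))
    (hind : iIndepFun (fun m ω => restrictRows c m (ε ω)) μ) (z : Fin M → Bool) :
    μ.map (fun ω => clusterTransform c P z (mosaicResid X P c (ε ω))) =
      μ.map (fun ω => mosaicResid X P c (ε ω)) := by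
  have hct : Measurable fun ω => clusterTransform c P z (ε ω) :=
    (measurable_clusterTransform c P z).comp hε
  simp_rw [← mosaicResid_clusterTransform c P X hPt hP hrank]
  calc μ.map (fun ω => mosaicResid X P c (clusterTransform c P z (ε ω)))
      = (μ.map fun ω => clusterTransform c P z (ε ω)).map (mosaicResid X P c) :=
        (Measure.map_map (measurable_mosaicResid c P X) hct).symm
    _ = (μ.map ε).map (mosaicResid X P c) := by rw [map_clusterTransform_eq c P hε hinv hind z]
    _ = μ.map (fun ω => mosaicResid X P c (ε ω)) :=
        Measure.map_map (measurable_mosaicResid c P X) hε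

end ClusterLaws

theorem stmt_2_general {Ω : Type*} [MeasurableSpace Ω] (μ : Measure Ω) [IsProbabilityMeasure μ]
    (N T D M R : ℕ)
    (c : Fin N → Fin M)
    (X : Fin D → Matrix (Fin N) (Fin T) ℝ) (βstar : Fin D → ℝ)
    (P : Matrix (Fin T) (Fin T) ℝ) (hPsymm : Pᵀ = P) (hPidem : P * P = 1)
    (ε : Ω → Matrix (Fin N) (Fin T) ℝ) (hmeas : Measurable ε)
    (Y : Ω → Matrix (Fin N) (Fin T) ℝ)
    (hY : ∀ ω i t, Y ω i t = (∑ d, X d i t * βstar d) + ε ω i t)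
    (hmarginv : ∀ m : Fin M,
      Measure.map (fun ω => restrictRows c m (ε ω)) μ =
        Measure.map (fun ω => restrictRows c m (ε ω * P)) μ)
    (hnull : iIndepFun
      (fun m ω => restrictRows c m (ε ω)) μ)
    (hrank : ∀ m : Fin M, IsUnit ((augDesign X P c m)ᵀ * augDesign X P c m))
    (B : Ω → Fin R → Fin M → Bool) (hBmeas : Measurable B)
    (hBunif : Measure.map B μ = (PMF.uniformOfFintype (Fin R → Fin M → Bool)).toMeasure)
    (hBindep : IndepFun ε B μ)
    (S : Matrix (Fin N) (Fin T) ℝ → ℝ) (hS : Measurable S)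
    (pval : Ω → ℝ)
    (hpval : ∀ ω, pval ω =
      (1 + (Nat.card {r : Fin R // S (mosaicResid X P c (Y ω)) ≤
        S (clusterTransform c P (B ω r) (mosaicResid X P c (Y ω)))} : ℝ)) / (R + 1)) :
    ∀ α : ℝ, 0 < α → α < 1 → μ {ω | pval ω ≤ α} ≤ ENNReal.ofReal α := by
  intro α hα _
  let _ := clusterAction c P hPidem
  have : MeasurableConstVAdd (Fin M → Bool) (Matrix (Fin N) (Fin T) ℝ) :=
    ⟨measurable_clusterTransform c P⟩
  have hresid : ∀ ω, mosaicResid X P c (Y ω) = mosaicResid X P c (ε ω) :=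
    fun ω => mosaicResid_eq_of_eq_add c P X hrank βstar (hY ω)
  have hevent : {ω | pval ω ≤ α} = {ω | (1 + (Nat.card {r : Fin R //
      S (mosaicResid X P c (ε ω)) ≤ S (B ω r +ᵥ mosaicResid X P c (ε ω))} : ℝ)) / (R + 1) ≤ α} := by
    ext ω
    rw [Set.mem_ofPred_eq, hpval, hresid]
    rfl
  rw [hevent]
  exact measure_pValue_le ((measurable_mosaicResid c P X).comp hmeas)
    (map_clusterTransform_mosaicResid c P X hPsymm hPidem hrank hmeas hmarginv hnull) hBmeas hBunif
    (hBindep.comp (measurable_mosaicResid c P X) measurable_id) hS hα.le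

/-- **finite-sample validity of the mosaic permutation test.**
Consider panel data `Y_{i,t} = X_{i,t}ᵀβ* + ε_{i,t}` with fixed covariates, a partition of
the `N` units into `M` clusters (membership map `c`), and `P` symmetric with `P² = I`.
Assume (i) marginal invariance of each cluster of errors and (ii) the null hypothesis of
joint cluster independence.  Let `ε̂` be the mosaic residuals (cluster-wise OLS on the
augmented designs, assumed full column rank), and let `ε̃⁽ʳ⁾` be the randomized residuals
obtained from `R` i.i.d. uniform sign patterns `B⁽ʳ⁾ ∈ {0,1}^M` drawn independently of the
data.  Then for every measurable test statistic `S` and every `α ∈ (0,1)`, the p-value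
`p = (1 + #{r : S(ε̂) ≤ S(ε̃⁽ʳ⁾)})/(R+1)` satisfies `P(p ≤ α) ≤ α`. -/
theorem stmt_2 {Ω : Type*} [MeasurableSpace Ω] (μ : Measure Ω) [IsProbabilityMeasure μ]
    (N T D M R : ℕ) (hM : 0 < M) (hR : 0 < R)
    (c : Fin N → Fin M)
    (X : Fin D → Matrix (Fin N) (Fin T) ℝ) (βstar : Fin D → ℝ)
    (P : Matrix (Fin T) (Fin T) ℝ) (hPsymm : Pᵀ = P) (hPidem : P * P = 1)
    (ε : Ω → Matrix (Fin N) (Fin T) ℝ) (hmeas : Measurable ε)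
    (Y : Ω → Matrix (Fin N) (Fin T) ℝ)
    (hY : ∀ ω i t, Y ω i t = (∑ d, X d i t * βstar d) + ε ω i t)
    (hmarginv : ∀ m : Fin M,
      Measure.map (fun ω => restrictRows c m (ε ω)) μ =
        Measure.map (fun ω => restrictRows c m (ε ω * P)) μ)
    (hnull : iIndepFun
      (fun m ω => restrictRows c m (ε ω)) μ)
    (hrank : ∀ m : Fin M, IsUnit ((augDesign X P c m)ᵀ * augDesign X P c m))
    (B : Ω → Fin R → Fin M → Bool) (hBmeas : Measurable B)
    (hBunif : Measure.map B μ = (PMF.uniformOfFintype (Fin R → Fin M → Bool)).toMeasure)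
    (hBindep : IndepFun ε B μ)
    (S : Matrix (Fin N) (Fin T) ℝ → ℝ) (hS : Measurable S)
    (pval : Ω → ℝ)
    (hpval : ∀ ω, pval ω =
      (1 + (Nat.card {r : Fin R // S (mosaicResid X P c (Y ω)) ≤
        S (clusterTransform c P (B ω r) (mosaicResid X P c (Y ω)))} : ℝ)) / (R + 1)) :
    ∀ α : ℝ, 0 < α → α < 1 → μ {ω | pval ω ≤ α} ≤ ENNReal.ofReal α :=
  stmt_2_general μ N T D M R c X βstar P hPsymm hPidem ε hmeas Y hY hmarginv hnull hrank B hBmeas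
    hBunif hBindep S hS pval hpval
end
end

section
/- Fix integers K ≥ 1 and M ≥ 2. Let 𝓜 = {(m, m') ∈ [M]² : m < m'} and consider pairs of index vectors (g, h) ∈ 𝓜^K (i.e., g, h ∈ [M]^K with g_k < h_k for each k). For m ∈ [M] define degree_m(g,h) = Σ_{k=1}^K (1[g_k = m] + 1[h_k = m]). Let 𝓢 = {(g,h) : ∃m, degree_m(g,h) = 1} (singletons) and 𝓔 = {(g,h) : degree_m(g,h) is even for all m}. Then the number of non-singleton, non-even pairs satisfies |(𝓜^K \ 𝓢) \ 𝓔| ≤ (2K)! · binom(3K, 2K) · Σ_{ℓ=1}^{K−1} binom(M, ℓ); in particular there is a constant C(K) depending only on K with |(𝓜^K \ 𝓢) \ 𝓔| ≤ C(K)·M^{K−1}. -/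
open Finset

/-- `degree_m(g,h) = Σ_{k} (1[g_k = m] + 1[h_k = m])`. -/
def pairDegree {K M : ℕ} (g h : Fin K → Fin M) (m : Fin M) : ℕ :=
  ∑ k : Fin K, ((if g k = m then 1 else 0) + (if h k = m then 1 else 0))

open Classical in
/-- The set of pairs `(g,h) ∈ 𝓜^K` (i.e. `g_k < h_k` for each `k`) that are neither
singletons (no cluster has degree exactly 1) nor even (not all degrees are even). -/
noncomputable def nonSingletonNonEven (K M : ℕ) :
    Finset ((Fin K → Fin M) × (Fin K → Fin M)) :=
  Finset.univ.filter (fun gh =>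
    (∀ k, gh.1 k < gh.2 k) ∧
    (¬ ∃ m, pairDegree gh.1 gh.2 m = 1) ∧
    (¬ ∀ m, Even (pairDegree gh.1 gh.2 m)))

lemma sum_pairDegree {K M : ℕ} (g h : Fin K → Fin M) :
    ∑ m : Fin M, pairDegree g h m = 2 * K := by
  unfold pairDegree
  rw [Finset.sum_comm]
  have : ∀ k : Fin K,
      ∑ m : Fin M, ((if g k = m then 1 else 0) + (if h k = m then 1 else 0)) = 2 := by
    intro k
    rw [Finset.sum_add_distrib, Finset.sum_ite_eq, Finset.sum_ite_eq]
    simp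
  simp [this, two_mul, mul_comm]

lemma one_le_pairDegree_fst {K M : ℕ} (g h : Fin K → Fin M) (k : Fin K) :
    1 ≤ pairDegree g h (g k) := by
  unfold pairDegree
  have := Finset.single_le_sum
    (f := fun k' : Fin K => (if g k' = g k then 1 else 0) + (if h k' = g k then 1 else 0))
    (fun _ _ => Nat.zero_le _) (Finset.mem_univ k)
  refine le_trans ?_ this
  simp

lemma one_le_pairDegree_snd {K M : ℕ} (g h : Fin K → Fin M) (k : Fin K) :
    1 ≤ pairDegree g h (h k) := by
  unfold pairDegree
  have := Finset.single_le_sum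
    (f := fun k' : Fin K => (if g k' = h k then 1 else 0) + (if h k' = h k then 1 else 0))
    (fun _ _ => Nat.zero_le _) (Finset.mem_univ k)
  refine le_trans ?_ this
  simp

open Classical in
lemma support_card_le {K M : ℕ} (g h : Fin K → Fin M)
    (h1 : ¬ ∃ m, pairDegree g h m = 1)
    (h2 : ¬ ∀ m, Even (pairDegree g h m)) :
    1 ≤ (Finset.univ.filter fun m => 0 < pairDegree g h m).card ∧
    (Finset.univ.filter fun m => 0 < pairDegree g h m).card ≤ K - 1 := by
  obtain ⟨m0, hm0⟩ := not_forall.mp h2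
  push_neg at h1
  rw [Nat.not_even_iff] at hm0
  set T := Finset.univ.filter fun m => 0 < pairDegree g h m with hT
  have hm0T : m0 ∈ T := by
    rw [hT, Finset.mem_filter]
    exact ⟨Finset.mem_univ _, by omega⟩
  have hsum : ∑ m ∈ T, pairDegree g h m = 2 * K := by
    rw [← sum_pairDegree g h]
    apply Finset.sum_subset (Finset.subset_univ _)
    intro m _ hm
    by_contra h0
    exact hm (Finset.mem_filter.mpr ⟨Finset.mem_univ _, Nat.pos_of_ne_zero h0⟩)
  have hle : ∀ m ∈ T, 2 + (if m = m0 then 1 else 0) ≤ pairDegree g h m := by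
    intro m hm
    rw [hT, Finset.mem_filter] at hm
    have hne := h1 m
    by_cases hmm : m = m0
    · subst hmm; simp; omega
    · simp [hmm]; omega
  have hbig : 2 * T.card + 1 ≤ 2 * K := by
    calc 2 * T.card + 1 = ∑ m ∈ T, (2 + if m = m0 then 1 else 0) := by
          rw [Finset.sum_add_distrib, Finset.sum_const, Finset.sum_ite_eq' T m0 (fun _ => 1)]
          simp [hm0T, mul_comm]
      _ ≤ ∑ m ∈ T, pairDegree g h m := Finset.sum_le_sum hle
      _ = 2 * K := hsum
  constructor
  · exact Finset.card_pos.mpr ⟨m0, hm0T⟩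
  · omega

lemma pow_le_bound (K : ℕ) :
    (K - 1) ^ (2 * K) ≤ (2 * K).factorial * Nat.choose (3 * K) (2 * K) := by
  have h1 : K.factorial * (K + 1) ^ (2 * K) ≤ (K + 2 * K).factorial :=
    Nat.factorial_mul_pow_le_factorial
  have h2 : Nat.choose (3 * K) (2 * K) * (2 * K).factorial * (3 * K - 2 * K).factorial
      = (3 * K).factorial := Nat.choose_mul_factorial_mul_factorial (by omega)
  have h3 : (3 * K - 2 * K) = K := by omega
  have h4 : K + 2 * K = 3 * K := by omega
  rw [h3] at h2
  have h5 : K.factorial * (K - 1) ^ (2 * K) ≤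
      K.factorial * ((2 * K).factorial * Nat.choose (3 * K) (2 * K)) := by
    calc K.factorial * (K - 1) ^ (2 * K)
        ≤ K.factorial * (K + 1) ^ (2 * K) :=
          Nat.mul_le_mul_left _ (Nat.pow_le_pow_left (by omega) _)
      _ ≤ (3 * K).factorial := by rw [← h4]; exact h1
      _ = K.factorial * ((2 * K).factorial * Nat.choose (3 * K) (2 * K)) := by
          rw [← h2]; ring
  exact Nat.le_of_mul_le_mul_left h5 K.factorial_pos

/-- Fix `K ≥ 1`.  There is a constant `C = C(K)` depending only on `K`
such that for every `M ≥ 2`, the number of non-singleton, non-even index-vector pairs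
`(g,h) ∈ 𝓜^K` satisfies both the explicit bound
`(2K)! · binom(3K,2K) · Σ_{ℓ=1}^{K−1} binom(M,ℓ)` and the bound `C · M^{K−1}`. -/
theorem stmt_13 (K : ℕ) (hK : 1 ≤ K) :
    ∃ C : ℕ, ∀ M : ℕ, 2 ≤ M →
      (nonSingletonNonEven K M).card ≤
        (2 * K).factorial * Nat.choose (3 * K) (2 * K) *
          ∑ ℓ ∈ Finset.Icc 1 (K - 1), Nat.choose M ℓ ∧
      (nonSingletonNonEven K M).card ≤ C * M ^ (K - 1) := by
  classical
  refine ⟨(2 * K).factorial * Nat.choose (3 * K) (2 * K) * (K - 1), fun M hM => ?_⟩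
  set n := (2 * K).factorial * Nat.choose (3 * K) (2 * K) with hn
  set f : (Fin K → Fin M) × (Fin K → Fin M) → Finset (Fin M) :=
    fun gh => Finset.univ.filter fun m => 0 < pairDegree gh.1 gh.2 m with hf
  set t : Finset (Finset (Fin M)) :=
    (Finset.Icc 1 (K - 1)).biUnion (fun ℓ => Finset.powersetCard ℓ Finset.univ) with ht
  -- maps-to
  have hmaps : ∀ gh ∈ nonSingletonNonEven K M, f gh ∈ t := by
    intro gh hgh
    rw [nonSingletonNonEven, Finset.mem_filter] at hgh
    obtain ⟨-, -, hgh1, hgh2⟩ := hgh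
    obtain ⟨hc1, hc2⟩ := support_card_le gh.1 gh.2 hgh1 hgh2
    rw [ht, Finset.mem_biUnion]
    exact ⟨(f gh).card, Finset.mem_Icc.mpr ⟨hc1, hc2⟩,
      Finset.mem_powersetCard.mpr ⟨Finset.subset_univ _, rfl⟩⟩
  -- fiber bound
  have hfib : ∀ T ∈ t, ((nonSingletonNonEven K M).filter fun gh => f gh = T).card ≤ n := by
    intro T hT
    rw [ht, Finset.mem_biUnion] at hT
    obtain ⟨ℓ, hℓ, hTℓ⟩ := hT
    rw [Finset.mem_powersetCard] at hTℓ
    rw [Finset.mem_Icc] at hℓ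
    have hTcard : T.card ≤ K - 1 := hTℓ.2 ▸ hℓ.2
    have hsub : ((nonSingletonNonEven K M).filter fun gh => f gh = T) ⊆
        (Fintype.piFinset fun _ : Fin K => T) ×ˢ (Fintype.piFinset fun _ : Fin K => T) := by
      intro gh hgh
      rw [Finset.mem_filter] at hgh
      obtain ⟨-, hfT⟩ := hgh
      rw [Finset.mem_product, Fintype.mem_piFinset, Fintype.mem_piFinset]
      constructor
      · intro k
        rw [← hfT, hf, Finset.mem_filter]
        exact ⟨Finset.mem_univ _, one_le_pairDegree_fst gh.1 gh.2 k⟩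
      · intro k
        rw [← hfT, hf, Finset.mem_filter]
        exact ⟨Finset.mem_univ _, one_le_pairDegree_snd gh.1 gh.2 k⟩
    calc ((nonSingletonNonEven K M).filter fun gh => f gh = T).card
        ≤ _ := Finset.card_le_card hsub
      _ = T.card ^ (2 * K) := by
          rw [Finset.card_product, Fintype.card_piFinset]
          simp [← pow_add, two_mul]
      _ ≤ (K - 1) ^ (2 * K) := Nat.pow_le_pow_left hTcard _
      _ ≤ n := pow_le_bound K
  have hmain : (nonSingletonNonEven K M).card ≤ n * t.card :=
    Finset.card_le_mul_card_image_of_maps_to hmaps n hfib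
  have htcard : t.card ≤ ∑ ℓ ∈ Finset.Icc 1 (K - 1), Nat.choose M ℓ := by
    rw [ht]
    refine (Finset.card_biUnion_le).trans (Finset.sum_le_sum fun ℓ _ => ?_)
    rw [Finset.card_powersetCard, Finset.card_univ, Fintype.card_fin]
  have key : (nonSingletonNonEven K M).card ≤
      n * ∑ ℓ ∈ Finset.Icc 1 (K - 1), Nat.choose M ℓ :=
    hmain.trans (Nat.mul_le_mul_left _ htcard)
  refine ⟨key, key.trans ?_⟩
  have hsum : ∑ ℓ ∈ Finset.Icc 1 (K - 1), Nat.choose M ℓ ≤ (K - 1) * M ^ (K - 1) := by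
    calc ∑ ℓ ∈ Finset.Icc 1 (K - 1), Nat.choose M ℓ
        ≤ ∑ ℓ ∈ Finset.Icc 1 (K - 1), M ^ (K - 1) := by
          refine Finset.sum_le_sum fun ℓ hℓ => ?_
          rw [Finset.mem_Icc] at hℓ
          exact (Nat.choose_le_pow M ℓ).trans (Nat.pow_le_pow_right (by omega) hℓ.2)
      _ = (K - 1) * M ^ (K - 1) := by
          rw [Finset.sum_const, Nat.card_Icc]
          simp [mul_comm]
  calc n * ∑ ℓ ∈ Finset.Icc 1 (K - 1), Nat.choose M ℓ
      ≤ n * ((K - 1) * M ^ (K - 1)) := Nat.mul_le_mul_left _ hsum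
    _ = n * (K - 1) * M ^ (K - 1) := by ring
end

section
/- Fix integers K ≥ 1, M ≥ 2, and m ∈ [M]. Let 𝓜 = {(m₁, m₂) ∈ [M]² : m₁ < m₂} and for (g,h) ∈ 𝓜^K define degree_{m'}(g,h) = Σ_{k=1}^K (1[g_k = m'] + 1[h_k = m']). Let 𝓔 = {(g,h) ∈ 𝓜^K : degree_{m'}(g,h) is even for all m' ∈ [M]} and 𝓔_m = {(g,h) ∈ 𝓔 : degree_m(g,h) > 0}. Then |𝓔_m| ≤ (2K)! · binom(3K, 2K) · Σ_{ℓ=1}^{K} binom(M, ℓ−1); in particular there is a constant C(K) depending only on K with |𝓔_m| ≤ C(K)·M^{K−1}. -/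
/-! Every cluster that occurs in a pair of `𝓔_m` has even, hence at least `2`, degree, and the
degrees add up to `2K`; so all values of `g` and `h` lie in `m` together with fewer than `K`
further clusters. There are at most `Σ_{j<K} binom(M, j)` such sets, and for each of them at most
`K^{2K} ≤ (K+1)(K+2)⋯(3K) = (2K)! · binom(3K, 2K)` pairs `(g, h)` take their values in it. -/

open Finset

open Classical in
/-- `𝓔_m`: the set of pairs `(g,h) ∈ 𝓜^K` (i.e. `g_k < h_k` for every `k`) such that every
cluster has even degree and cluster `m` has positive degree. -/
noncomputable def evenWithCluster (K M : ℕ) (m : Fin M) :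
    Finset ((Fin K → Fin M) × (Fin K → Fin M)) :=
  Finset.univ.filter (fun gh =>
    (∀ k, gh.1 k < gh.2 k) ∧
    (∀ m', Even (pairDegree gh.1 gh.2 m')) ∧
    0 < pairDegree gh.1 gh.2 m)

lemma pow_le_factorial_mul_choose (n k : ℕ) : k ^ n ≤ n.factorial * (k + n).choose n :=
  calc k ^ n ≤ (k + 1) ^ n := Nat.pow_le_pow_left k.le_succ n
    _ ≤ (k + 1).ascFactorial n := Nat.pow_succ_le_ascFactorial _ _
    _ = n.factorial * (k + n).choose n := Nat.ascFactorial_eq_factorial_mul_choose k n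

lemma two_mul_card_filter_pos_le_sum {α : Type*} (s : Finset α) (f : α → ℕ)
    (hf : ∀ a ∈ s, Even (f a)) :
    2 * #{a ∈ s | 0 < f a} ≤ ∑ a ∈ s, f a :=
  calc 2 * #{a ∈ s | 0 < f a} ≤ ∑ a ∈ s with 0 < f a, f a := by
        rw [mul_comm, ← smul_eq_mul]
        refine card_nsmul_le_sum _ _ _ fun a ha => ?_
        obtain ⟨has, hpos⟩ := mem_filter.mp ha
        obtain ⟨c, hc⟩ := hf a has
        omega
    _ ≤ ∑ a ∈ s, f a := sum_le_sum_of_subset (filter_subset _ _)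

lemma sum_Icc_one_sub_one_eq_sum_range {β : Type*} [AddCommMonoid β] (f : ℕ → β) (n : ℕ) :
    ∑ ℓ ∈ Icc 1 n, f (ℓ - 1) = ∑ j ∈ range n, f j := by
  rw [← Ico_add_one_right_eq_Icc, sum_Ico_eq_sum_range]
  simp

lemma sum_range_choose_le_mul_pow {M : ℕ} (hM : 1 ≤ M) (K : ℕ) :
    ∑ j ∈ range K, M.choose j ≤ K * M ^ (K - 1) :=
  calc ∑ j ∈ range K, M.choose j ≤ ∑ _j ∈ range K, M ^ (K - 1) :=
        sum_le_sum fun j hj =>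
          (M.choose_le_pow j).trans (Nat.pow_le_pow_right hM (by rw [mem_range] at hj; omega))
    _ = K * M ^ (K - 1) := by simp

namespace pairDegree

variable {K M : ℕ} (g h : Fin K → Fin M)

lemma sum_eq : ∑ m, pairDegree g h m = 2 * K := by
  simp only [pairDegree]
  rw [sum_comm]
  simp [sum_add_distrib, sum_ite_eq, mul_comm]

lemma pos_iff (m : Fin M) : 0 < pairDegree g h m ↔ m ∈ univ.image g ∪ univ.image h := by
  simp [pairDegree, sum_pos_iff, eq_comm, exists_or, apply_ite (0 < ·)]

lemma card_image_union_le (heven : ∀ m, Even (pairDegree g h m)) :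
    #(univ.image g ∪ univ.image h) ≤ K := by
  have hsupp : univ.image g ∪ univ.image h = univ.filter (0 < pairDegree g h ·) := by
    ext m; simp [pos_iff]
  have := two_mul_card_filter_pos_le_sum univ _ fun m _ => heven m
  rw [sum_eq, ← hsupp] at this
  omega

end pairDegree

lemma exists_range_subset_insert_of_mem_evenWithCluster {K M : ℕ} {m : Fin M}
    {gh : (Fin K → Fin M) × (Fin K → Fin M)} (hgh : gh ∈ evenWithCluster K M m) :
    ∃ T : Finset (Fin M), #T < K ∧ ∀ k, gh.1 k ∈ insert m T ∧ gh.2 k ∈ insert m T := by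
  obtain ⟨g, h⟩ := gh
  simp only [evenWithCluster, mem_filter, mem_univ, true_and] at hgh
  obtain ⟨-, heven, hm⟩ := hgh
  set U := univ.image g ∪ univ.image h
  have hmU : m ∈ U := (pairDegree.pos_iff g h m).mp hm
  refine ⟨U.erase m, ?_, fun k => ?_⟩
  · have hU : #U ≤ K := pairDegree.card_image_union_le g h heven
    have hU_pos : 0 < #U := card_pos.mpr ⟨m, hmU⟩
    rw [card_erase_of_mem hmU]
    omega
  · rw [insert_erase hmU]
    exact ⟨mem_union_left _ (mem_image_of_mem g (mem_univ k)),
      mem_union_right _ (mem_image_of_mem h (mem_univ k))⟩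

lemma card_evenWithCluster_le (K M : ℕ) (m : Fin M) :
    #(evenWithCluster K M m) ≤ (∑ j ∈ range K, M.choose j) * K ^ (2 * K) := by
  let pairsInto (T : Finset (Fin M)) :=
    (Fintype.piFinset fun _ : Fin K => insert m T) ×ˢ
      (Fintype.piFinset fun _ : Fin K => insert m T)
  have hsub : evenWithCluster K M m ⊆
      (range K).biUnion fun j => (powersetCard j univ).biUnion pairsInto := by
    intro gh hgh
    obtain ⟨T, hT, hmem⟩ := exists_range_subset_insert_of_mem_evenWithCluster hgh
    simp only [mem_biUnion, mem_range, mem_powersetCard, pairsInto, mem_product,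
      Fintype.mem_piFinset]
    exact ⟨#T, hT, T, ⟨subset_univ T, rfl⟩, fun k => (hmem k).1, fun k => (hmem k).2⟩
  have hcard : ∀ j ∈ range K, ∀ T ∈ powersetCard j (univ : Finset (Fin M)),
      #(pairsInto T) ≤ K ^ (2 * K) := by
    intro j hj T hT
    rw [mem_range] at hj
    rw [mem_powersetCard] at hT
    have : #(insert m T) ≤ K := (card_insert_le m T).trans (by omega)
    simp only [pairsInto, card_product, Fintype.card_piFinset, prod_const, card_univ,
      Fintype.card_fin, two_mul, pow_add]
    exact Nat.mul_le_mul (Nat.pow_le_pow_left this K) (Nat.pow_le_pow_left this K)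
  calc #(evenWithCluster K M m)
      ≤ ∑ j ∈ range K, ∑ T ∈ powersetCard j univ, #(pairsInto T) :=
        (card_le_card hsub).trans <| card_biUnion_le.trans <|
          sum_le_sum fun j _ => card_biUnion_le
    _ ≤ ∑ j ∈ range K, ∑ T ∈ powersetCard j (univ : Finset (Fin M)), K ^ (2 * K) :=
        sum_le_sum fun j hj => sum_le_sum fun T hT => hcard j hj T hT
    _ = (∑ j ∈ range K, M.choose j) * K ^ (2 * K) := by
        simp [sum_mul]

theorem stmt_14_general (K : ℕ) :
    ∃ C : ℕ, ∀ M : ℕ, 2 ≤ M → ∀ m : Fin M,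
      (evenWithCluster K M m).card ≤
        (2 * K).factorial * Nat.choose (3 * K) (2 * K) *
          ∑ ℓ ∈ Finset.Icc 1 K, Nat.choose M (ℓ - 1) ∧
      (evenWithCluster K M m).card ≤ C * M ^ (K - 1) := by
  set A := (2 * K).factorial * Nat.choose (3 * K) (2 * K)
  have hA : K ^ (2 * K) ≤ A := by
    simpa [A, show K + 2 * K = 3 * K by ring] using pow_le_factorial_mul_choose (2 * K) K
  refine ⟨A * K, fun M hM m => ⟨?_, ?_⟩⟩
  · calc #(evenWithCluster K M m) ≤ (∑ j ∈ range K, M.choose j) * K ^ (2 * K) :=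
          card_evenWithCluster_le K M m
      _ ≤ A * ∑ ℓ ∈ Icc 1 K, M.choose (ℓ - 1) := by
          rw [sum_Icc_one_sub_one_eq_sum_range, mul_comm]; exact Nat.mul_le_mul_right _ hA
  · calc #(evenWithCluster K M m) ≤ (∑ j ∈ range K, M.choose j) * K ^ (2 * K) :=
          card_evenWithCluster_le K M m
      _ ≤ K * M ^ (K - 1) * A :=
          Nat.mul_le_mul (sum_range_choose_le_mul_pow (by omega) K) hA
      _ = A * K * M ^ (K - 1) := by ring

/-- Fix `K ≥ 1`.  There is a constant `C = C(K)` depending only on `K`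
such that for every `M ≥ 2` and every `m ∈ [M]`, the cardinality of `𝓔_m` satisfies both
the explicit bound `(2K)! · binom(3K,2K) · Σ_{ℓ=1}^{K} binom(M,ℓ−1)` and the bound
`C · M^{K−1}`. -/
theorem stmt_14 (K : ℕ) (hK : 1 ≤ K) :
    ∃ C : ℕ, ∀ M : ℕ, 2 ≤ M → ∀ m : Fin M,
      (evenWithCluster K M m).card ≤
        (2 * K).factorial * Nat.choose (3 * K) (2 * K) *
          ∑ ℓ ∈ Finset.Icc 1 K, Nat.choose M (ℓ - 1) ∧
      (evenWithCluster K M m).card ≤ C * M ^ (K - 1) :=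
  stmt_14_general K
end
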